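/- Let k ≥ 1 be a natural number, c > 0 a real number, M ≥ 1 a natural number, and let R_1, …, R_M and R be nonnegative real numbers satisfying ∑_{p=1}^M R_p^k ≤ M · R^k. Then ∑_{p=1}^M Γ(k/2, c·R_p²) ≥ M · Γ(k/2, c·R²). -/

import Mathlib

open Real Finset

/-- The upper incomplete gamma function `Γ(s, x) = ∫_x^∞ t^(s-1) e^(-t) dt`. -/
noncomputable def upperIncompleteGamma (s x : ℝ) : ℝ :=
  ∫ t in Set.Ioi x, t ^ (s - 1) * Real.exp (-t)

/-!
Write `s = k/2`. Since `(R^k)^(1/s) = R^2`, the claim compares values of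
`g x = Γ(s, c·x^(1/s))` at the points `x_p = R_p^k` and at `R^k`. The derivative of `g` on
`(0, ∞)` is `-(c^s/s)·e^(-c·x^(1/s))`, which is increasing, so `g` is convex and Jensen gives
`M·g(avg x_p) ≤ ∑ g(x_p)`; as `g` is decreasing and `avg x_p ≤ R^k`, also
`g(R^k) ≤ g(avg x_p)`.
-/

open MeasureTheory Set

lemma ConvexOn.card_mul_map_average_le {ι E : Type*} [AddCommGroup E] [Module ℝ E]
    {D : Set E} {f : E → ℝ} (hf : ConvexOn ℝ D f) {t : Finset ι} {x : ι → E}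
    (hx : ∀ i ∈ t, x i ∈ D) :
    #t * f ((#t : ℝ)⁻¹ • ∑ i ∈ t, x i) ≤ ∑ i ∈ t, f (x i) := by
  obtain rfl | ht := t.eq_empty_or_nonempty
  · simp
  have hcard : (0 : ℝ) < #t := by exact_mod_cast ht.card_pos
  have hjensen := hf.map_sum_le (w := fun _ => (#t : ℝ)⁻¹) (fun _ _ => by positivity)
    (by simp [hcard.ne']) hx
  rw [← smul_sum, ← smul_sum, smul_eq_mul] at hjensen
  rwa [← le_inv_mul_iff₀ hcard]

lemma pow_rpow_inv_div_two {r : ℝ} (hr : 0 ≤ r) {k : ℕ} (hk : k ≠ 0) :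
    (r ^ k) ^ ((k : ℝ) / 2)⁻¹ = r ^ 2 := by
  have hk' : (k : ℝ) ≠ 0 := by exact_mod_cast hk
  rw [← rpow_natCast, ← rpow_mul hr, show (k : ℝ) * ((k : ℝ) / 2)⁻¹ = 2 by field_simp,
    rpow_two]

section UpperIncompleteGamma

variable {s : ℝ}

lemma intervalIntegrable_rpow_sub_one_mul_exp_neg (hs : 0 < s) (a b : ℝ) :
    IntervalIntegrable (fun t : ℝ => t ^ (s - 1) * exp (-t)) volume a b :=
  (intervalIntegral.intervalIntegrable_rpow' (by linarith)).mul_continuousOn (by fun_prop)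

lemma upperIncompleteGamma_eq_sub_integral (hs : 0 < s) {x : ℝ} (hx : 0 ≤ x) :
    upperIncompleteGamma s x =
      upperIncompleteGamma s 0 - ∫ t in 0..x, t ^ (s - 1) * exp (-t) := by
  have hint : IntegrableOn (fun t : ℝ => t ^ (s - 1) * exp (-t)) (Ioi 0) :=
    (GammaIntegral_convergent hs).congr_fun (fun _ _ => mul_comm _ _) measurableSet_Ioi
  rw [← intervalIntegral.integral_Ioi_sub_Ioi hint hx, upperIncompleteGamma,
    upperIncompleteGamma, sub_sub_cancel]

lemma continuousOn_upperIncompleteGamma (hs : 0 < s) :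
    ContinuousOn (upperIncompleteGamma s) (Ici 0) :=
  (continuous_const.sub (intervalIntegral.continuous_primitive
    (intervalIntegrable_rpow_sub_one_mul_exp_neg hs) 0)).continuousOn.congr
    fun _ hx => upperIncompleteGamma_eq_sub_integral hs hx

lemma hasDerivAt_upperIncompleteGamma (hs : 0 < s) {x : ℝ} (hx : 0 < x) :
    HasDerivAt (upperIncompleteGamma s) (-(x ^ (s - 1) * exp (-x))) x := by
  have hprimitive := intervalIntegral.integral_hasDerivAt_right
    (intervalIntegrable_rpow_sub_one_mul_exp_neg hs 0 x)
    ((by fun_prop : Measurable fun t : ℝ => t ^ (s - 1) * exp (-t)).aestronglyMeasurable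
      |>.stronglyMeasurableAtFilter)
    ((continuousAt_rpow_const _ _ (Or.inl hx.ne')).mul (by fun_prop))
  refine (hprimitive.const_sub (upperIncompleteGamma s 0)).congr_of_eventuallyEq ?_
  filter_upwards [eventually_ge_nhds hx] with y hy
  exact upperIncompleteGamma_eq_sub_integral hs hy

lemma antitoneOn_upperIncompleteGamma (hs : 0 < s) :
    AntitoneOn (upperIncompleteGamma s) (Ici 0) := by
  refine antitoneOn_of_deriv_nonpos (convex_Ici 0) (continuousOn_upperIncompleteGamma hs)
    (fun x hx => ?_) fun x hx => ?_ <;> rw [interior_Ici] at hx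
  · exact (hasDerivAt_upperIncompleteGamma hs hx).differentiableAt.differentiableWithinAt
  · rw [(hasDerivAt_upperIncompleteGamma hs hx).deriv, neg_nonpos]
    exact mul_nonneg (rpow_nonneg hx.le _) (exp_nonneg _)

lemma hasDerivAt_upperIncompleteGamma_mul_rpow_inv (hs : 0 < s) {b x : ℝ} (hb : 0 < b)
    (hx : 0 < x) :
    HasDerivAt (fun y => upperIncompleteGamma s (b * y ^ s⁻¹))
      (-(s⁻¹ * b ^ s * exp (-(b * x ^ s⁻¹)))) x := by
  have hinner := (hasDerivAt_rpow_const (p := s⁻¹) (Or.inl hx.ne')).const_mul b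
  refine ((hasDerivAt_upperIncompleteGamma hs (by positivity)).comp x hinner).congr_deriv ?_
  have hpow : x ^ ((s - 1) / s) * x ^ s⁻¹ = x := by
    rw [← rpow_add hx, show (s - 1) / s + s⁻¹ = 1 by field_simp; ring, rpow_one]
  rw [mul_rpow hb.le (by positivity), ← rpow_mul hx.le, rpow_sub_one hb.ne',
    rpow_sub_one hx.ne', inv_mul_eq_div]
  calc _ = -(s⁻¹ * b ^ s * exp (-(b * x ^ s⁻¹)) * (x ^ ((s - 1) / s) * x ^ s⁻¹ / x)) := by
        field_simp
    _ = _ := by rw [hpow, div_self hx.ne', mul_one]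

lemma convexOn_upperIncompleteGamma_mul_rpow_inv (hs : 0 < s) {b : ℝ} (hb : 0 < b) :
    ConvexOn ℝ (Ici 0) fun x => upperIncompleteGamma s (b * x ^ s⁻¹) := by
  have hcont : ContinuousOn (fun x : ℝ => b * x ^ s⁻¹) (Ici 0) :=
    continuousOn_const.mul (continuousOn_id.rpow_const fun _ _ => Or.inr (by positivity))
  refine MonotoneOn.convexOn_of_deriv (convex_Ici 0)
    ((continuousOn_upperIncompleteGamma hs).comp hcont fun x hx => ?_) (fun x hx => ?_) ?_
  · exact mul_nonneg hb.le (rpow_nonneg hx _)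
  · rw [interior_Ici] at hx
    exact (hasDerivAt_upperIncompleteGamma_mul_rpow_inv hs hb hx).differentiableAt
      |>.differentiableWithinAt
  · rw [interior_Ici]
    intro x hx y hy hxy
    rw [(hasDerivAt_upperIncompleteGamma_mul_rpow_inv hs hb hx).deriv,
      (hasDerivAt_upperIncompleteGamma_mul_rpow_inv hs hb hy).deriv]
    gcongr
    exact hx.le

end UpperIncompleteGamma

theorem sum_upperIncompleteGamma_radii_ge_general (k : ℕ) (hk : 1 ≤ k) (c : ℝ) (hc : 0 < c)
    (M : ℕ) (R : Fin M → ℝ) (R₀ : ℝ)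
    (hR : ∀ p, 0 ≤ R p)
    (hsum : ∑ p, R p ^ k ≤ (M : ℝ) * R₀ ^ k) :
    (M : ℝ) * upperIncompleteGamma ((k : ℝ) / 2) (c * R₀ ^ 2) ≤
      ∑ p, upperIncompleteGamma ((k : ℝ) / 2) (c * R p ^ 2) := by
  obtain rfl | hM := M.eq_zero_or_pos
  · simp
  set s : ℝ := (k : ℝ) / 2
  have hs : 0 < s := by positivity
  set g : ℝ → ℝ := fun x => upperIncompleteGamma s (c * x ^ s⁻¹)
  have hg : ∀ r, 0 ≤ r → g (r ^ k) = upperIncompleteGamma s (c * r ^ 2) := fun r hr => by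
    simp only [g, s, pow_rpow_inv_div_two hr (Nat.one_le_iff_ne_zero.mp hk)]
  have havg : (M : ℝ)⁻¹ * ∑ p, R p ^ k ≤ |R₀| ^ k := by
    rw [inv_mul_le_iff₀ (by positivity)]
    exact hsum.trans <| mul_le_mul_of_nonneg_left
      ((le_abs_self _).trans (abs_pow R₀ k).le) (by positivity)
  calc (M : ℝ) * upperIncompleteGamma s (c * R₀ ^ 2) = M * g (|R₀| ^ k) := by
        rw [hg _ (abs_nonneg _), sq_abs]
    _ ≤ M * g ((M : ℝ)⁻¹ * ∑ p, R p ^ k) := by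
        have havg_nonneg : 0 ≤ (M : ℝ)⁻¹ * ∑ p, R p ^ k :=
          mul_nonneg (by positivity) (sum_nonneg fun p _ => pow_nonneg (hR p) k)
        gcongr
        refine antitoneOn_upperIncompleteGamma hs (mul_nonneg hc.le (rpow_nonneg havg_nonneg _))
          (mul_nonneg hc.le (rpow_nonneg (by positivity) _)) ?_
        gcongr
    _ ≤ ∑ p, g (R p ^ k) := by
        simpa using (convexOn_upperIncompleteGamma_mul_rpow_inv hs hc).card_mul_map_average_le
          (t := univ) fun p _ => pow_nonneg (hR p) k
    _ = ∑ p, upperIncompleteGamma s (c * R p ^ 2) := sum_congr rfl fun p _ => hg _ (hR p)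

/-- If `∑_{p=1}^M R_p^k ≤ M · R^k` for nonnegative radii, then
`∑_{p=1}^M Γ(k/2, c·R_p²) ≥ M · Γ(k/2, c·R²)`. -/
theorem sum_upperIncompleteGamma_radii_ge (k : ℕ) (hk : 1 ≤ k) (c : ℝ) (hc : 0 < c)
    (M : ℕ) (hM : 1 ≤ M) (R : Fin M → ℝ) (R₀ : ℝ)
    (hR : ∀ p, 0 ≤ R p) (hR₀ : 0 ≤ R₀)
    (hsum : ∑ p, R p ^ k ≤ (M : ℝ) * R₀ ^ k) :
    (M : ℝ) * upperIncompleteGamma ((k : ℝ) / 2) (c * R₀ ^ 2) ≤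
      ∑ p, upperIncompleteGamma ((k : ℝ) / 2) (c * R p ^ 2) :=
  sum_upperIncompleteGamma_radii_ge_general k hk c hc M R R₀ hR hsum
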